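/- arXiv:1903.05546 — 2 statements merged into one kernel-verified Lean document; each statement's English description precedes it below -/
import Mathlib

section
/- Let π be the probability measure on tempered measures with Laplace transform L_π(f) = exp(−∫_0^∞ ψ(V_s f) ds). Then π is invariant for the Markov kernel P_t with Laplace transform ∫ e^{−⟨f,ν⟩} P_t(μ,dν) = exp(−⟨V_t f, μ⟩ − ∫_0^t ψ(V_s f) ds); that is, ∫∫ e^{−⟨f,ν⟩} P_t(μ,dν) π(dμ) = L_π(f) for all t ≥ 0 and nonnegative f. -/
/-!
By the Laplace transform of `P_t`, integrating against `π` turns `exp (-⟨V_t f, μ⟩)` into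
`L_π (V_t f)`. Since `V_s V_t = V_{s+t}`, the shift `s ↦ s + t` identifies the exponent of
`L_π (V_t f)` with the tail `∫_t^∞ ψ (V_s f) ds`, and adding the remaining factor
`exp (-∫_0^t ψ (V_s f) ds)` restores `∫_0^∞ ψ (V_s f) ds`.
-/

open MeasureTheory Set

theorem integral_Ioi_comp_add_right {F : Type*} [NormedAddCommGroup F] [NormedSpace ℝ F]
    (g : ℝ → F) (a t : ℝ) :
    ∫ s in Ioi a, g (s + t) = ∫ s in Ioi (a + t), g s := by
  rw [← (measurePreserving_add_right volume t).setIntegral_preimage_emb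
    (measurableEmbedding_addRight t) g (Ioi (a + t)), preimage_add_const_Ioi, add_sub_cancel_right]

theorem invariance_of_limit_measure_general
    {E M : Type*} [MeasurableSpace M]
    (pair : (E → ℝ) → M → ℝ)
    (ψ : (E → ℝ) → ℝ)
    (V : ℝ → (E → ℝ) → E → ℝ)
    (hVsem : ∀ s t (f : E → ℝ), (∀ x, 0 ≤ f x) → V s (V t f) = V (s + t) f)
    (hVpos : ∀ t (f : E → ℝ), (∀ x, 0 ≤ f x) → ∀ x, 0 ≤ V t f x)
    (P : ℝ → M → Measure M) (π : Measure M)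
    (hLap : ∀ t, 0 ≤ t → ∀ μ, ∀ f : E → ℝ, (∀ x, 0 ≤ f x) →
      ∫ ν, Real.exp (-(pair f ν)) ∂(P t μ)
        = Real.exp (-(pair (V t f) μ) - ∫ s in (0:ℝ)..t, ψ (V s f)))
    (hπ : ∀ f : E → ℝ, (∀ x, 0 ≤ f x) →
      ∫ μ, Real.exp (-(pair f μ)) ∂π
        = Real.exp (-(∫ s in Set.Ioi (0:ℝ), ψ (V s f))))
    (hψint : ∀ f : E → ℝ, (∀ x, 0 ≤ f x) →
      IntegrableOn (fun s => ψ (V s f)) (Set.Ioi 0)) :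
    ∀ t, 0 ≤ t → ∀ f : E → ℝ, (∀ x, 0 ≤ f x) →
      ∫ μ, (∫ ν, Real.exp (-(pair f ν)) ∂(P t μ)) ∂π
        = Real.exp (-(∫ s in Set.Ioi (0:ℝ), ψ (V s f))) := by
  intro t ht f hf
  have tail : ∫ s in Ioi (0:ℝ), ψ (V s (V t f)) = ∫ s in Ioi t, ψ (V s f) := by
    simp_rw [hVsem _ t f hf]
    simpa using integral_Ioi_comp_add_right (fun s => ψ (V s f)) 0 t
  have hψint_tail : IntegrableOn (fun s => ψ (V s f)) (Ioi t) :=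
    (hψint f hf).mono_set (Ioi_subset_Ioi ht)
  calc ∫ μ, (∫ ν, Real.exp (-(pair f ν)) ∂(P t μ)) ∂π
      = (∫ μ, Real.exp (-(pair (V t f) μ)) ∂π) * Real.exp (-∫ s in (0:ℝ)..t, ψ (V s f)) := by
        simp_rw [hLap t ht _ f hf, sub_eq_add_neg, Real.exp_add]
        exact integral_mul_const _ _
    _ = Real.exp (-((∫ s in (0:ℝ)..t, ψ (V s f)) + ∫ s in Ioi t, ψ (V s f))) := by
        rw [hπ _ (hVpos t f hf), tail, ← Real.exp_add, neg_add, add_comm]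
    _ = Real.exp (-(∫ s in Ioi (0:ℝ), ψ (V s f))) := by
        rw [intervalIntegral.integral_interval_add_Ioi (hψint f hf) hψint_tail]

/-- The probability measure `π` with Laplace transform `exp(-∫_0^∞ ψ(V_s f) ds)` is
invariant for the Markov kernel `P_t`: integrating the Laplace transform of `P_t(μ,·)`
against `π(dμ)` returns `L_π(f)`. -/
theorem invariance_of_limit_measure
    {E M : Type*} [MeasurableSpace M]
    (pair : (E → ℝ) → M → ℝ)
    (ψ : (E → ℝ) → ℝ)
    (V : ℝ → (E → ℝ) → E → ℝ)
    (hVsem : ∀ s t (f : E → ℝ), (∀ x, 0 ≤ f x) → V s (V t f) = V (s + t) f)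
    (hVpos : ∀ t (f : E → ℝ), (∀ x, 0 ≤ f x) → ∀ x, 0 ≤ V t f x)
    (P : ℝ → M → Measure M) (π : Measure M) [IsProbabilityMeasure π]
    (hLap : ∀ t, 0 ≤ t → ∀ μ, ∀ f : E → ℝ, (∀ x, 0 ≤ f x) →
      ∫ ν, Real.exp (-(pair f ν)) ∂(P t μ)
        = Real.exp (-(pair (V t f) μ) - ∫ s in (0:ℝ)..t, ψ (V s f)))
    (hπ : ∀ f : E → ℝ, (∀ x, 0 ≤ f x) →
      ∫ μ, Real.exp (-(pair f μ)) ∂π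
        = Real.exp (-(∫ s in Set.Ioi (0:ℝ), ψ (V s f))))
    (hψint : ∀ f : E → ℝ, (∀ x, 0 ≤ f x) →
      IntegrableOn (fun s => ψ (V s f)) (Set.Ioi 0)) :
    ∀ t, 0 ≤ t → ∀ f : E → ℝ, (∀ x, 0 ≤ f x) →
      ∫ μ, (∫ ν, Real.exp (-(pair f ν)) ∂(P t μ)) ∂π
        = Real.exp (-(∫ s in Set.Ioi (0:ℝ), ψ (V s f))) :=
  invariance_of_limit_measure_general pair ψ V hVsem hVpos P π hLap hπ hψint
end

section
/- Let Q_t(μ,·) be Markov kernels with first moments ∫ ⟨h,ν⟩ Q_t(μ,dν) = R_t h evaluated against μ, where R_t h ≤ C·h·e^{−δt}. Then for any μ, μ̃, the Wasserstein-1 distance (with respect to the weighted total variation metric) satisfies W₁(Q_t(μ,·), Q_t(μ̃,·)) ≤ C·e^{−δt}·(⟨h,μ⟩ + ⟨h,μ̃⟩). -/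
/-!
The product of the two kernel measures is a coupling, and under it the cost of a pair `(ν, ν')`
is at most `⟨h,ν⟩ + ⟨h,ν'⟩`. Its expected cost therefore splits into the two first moments,
each of which is bounded by `C e^{-δt} ⟨h,μ⟩` through the moment formula and `R_t h ≤ C e^{-δt} h`.
-/

open MeasureTheory
open scoped ENNReal

noncomputable def wassersteinOne {M : Type*} [MeasurableSpace M]
    (d : M → M → ℝ≥0∞) (ρ σ : Measure M) : ℝ≥0∞ :=
  ⨅ (H : Measure (M × M)) (_ : H.map Prod.fst = ρ ∧ H.map Prod.snd = σ),
    ∫⁻ p, d p.1 p.2 ∂H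

section Coupling

variable {M : Type*} [MeasurableSpace M] (d : M → M → ℝ≥0∞)
  (ρ σ : Measure M) [IsProbabilityMeasure ρ] [IsProbabilityMeasure σ]

theorem wassersteinOne_le_lintegral_prod :
    wassersteinOne d ρ σ ≤ ∫⁻ p, d p.1 p.2 ∂(ρ.prod σ) := by
  have hcoupling : (ρ.prod σ).map Prod.fst = ρ ∧ (ρ.prod σ).map Prod.snd = σ := by
    simp only [Measure.map_fst_prod, Measure.map_snd_prod, measure_univ, one_smul, and_self]
  exact iInf₂_le (ρ.prod σ) hcoupling

theorem wassersteinOne_le_lintegral_add_lintegral {f : M → ℝ≥0∞} (hf : Measurable f)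
    (hd : ∀ x y, d x y ≤ f x + f y) :
    wassersteinOne d ρ σ ≤ ∫⁻ x, f x ∂ρ + ∫⁻ y, f y ∂σ := by
  have hfst : ∫⁻ p, f p.1 ∂(ρ.prod σ) = ∫⁻ x, f x ∂ρ := by
    rw [← lintegral_map hf measurable_fst, Measure.map_fst_prod, measure_univ, one_smul]
  have hsnd : ∫⁻ p, f p.2 ∂(ρ.prod σ) = ∫⁻ y, f y ∂σ := by
    rw [← lintegral_map hf measurable_snd, Measure.map_snd_prod, measure_univ, one_smul]
  calc wassersteinOne d ρ σ ≤ ∫⁻ p, d p.1 p.2 ∂(ρ.prod σ) :=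
        wassersteinOne_le_lintegral_prod d ρ σ
    _ ≤ ∫⁻ p, f p.1 + f p.2 ∂(ρ.prod σ) := lintegral_mono fun p => hd p.1 p.2
    _ = ∫⁻ x, f x ∂ρ + ∫⁻ y, f y ∂σ := by
        rw [lintegral_add_left (f := fun p : M × M => f p.1) (hf.comp measurable_fst),
          hfst, hsnd]

end Coupling

theorem wasserstein_kernel_bound_general
    {E M : Type*} [MeasurableSpace M]
    (h : E → ℝ) (pair : (E → ℝ) → M → ℝ)
    (hpairh_nonneg : ∀ ν, 0 ≤ pair h ν)
    (hpairh_meas : Measurable fun ν => pair h ν)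
    (hpair_mono : ∀ (g₁ g₂ : E → ℝ) μ, (∀ x, g₁ x ≤ g₂ x) → pair g₁ μ ≤ pair g₂ μ)
    (hpair_smul : ∀ (c : ℝ) μ, 0 ≤ c → pair (fun x => c * h x) μ = c * pair h μ)
    (d : M → M → ℝ≥0∞)
    (hd_tri : ∀ ν ν' : M, d ν ν' ≤ ENNReal.ofReal (pair h ν + pair h ν'))
    (Q : ℝ → M → Measure M) (hQprob : ∀ t μ, IsProbabilityMeasure (Q t μ))
    (R : ℝ → (E → ℝ) → E → ℝ)
    (C δ : ℝ) (hC : 0 < C)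
    (hmom : ∀ t μ, ∫ ν, pair h ν ∂(Q t μ) = pair (R t h) μ)
    (hint : ∀ t μ, Integrable (fun ν => pair h ν) (Q t μ))
    (hRh : ∀ t, 0 ≤ t → ∀ x, R t h x ≤ C * h x * Real.exp (-δ * t)) :
    ∀ t, 0 ≤ t → ∀ μ μ' : M,
      wassersteinOne d (Q t μ) (Q t μ')
        ≤ ENNReal.ofReal (C * Real.exp (-δ * t) * (pair h μ + pair h μ')) := by
  intro t ht μ μ'
  set c := C * Real.exp (-δ * t)
  have hc : 0 ≤ c := by positivity
  have hmoment :
      ∀ ρ, ∫⁻ ν, ENNReal.ofReal (pair h ν) ∂(Q t ρ) ≤ ENNReal.ofReal (c * pair h ρ) := by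
    intro ρ
    rw [← ofReal_integral_eq_lintegral_ofReal (hint t ρ) (.of_forall hpairh_nonneg), hmom]
    refine ENNReal.ofReal_le_ofReal ((hpair_mono _ (fun x => c * h x) ρ fun x => ?_).trans_eq
      (hpair_smul c ρ hc))
    linarith [hRh t ht x]
  have hsplit : ∀ ν ν', d ν ν' ≤ ENNReal.ofReal (pair h ν) + ENNReal.ofReal (pair h ν') :=
    fun ν ν' => (hd_tri ν ν').trans_eq (ENNReal.ofReal_add (hpairh_nonneg ν) (hpairh_nonneg ν'))
  calc wassersteinOne d (Q t μ) (Q t μ')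
      ≤ ∫⁻ ν, ENNReal.ofReal (pair h ν) ∂(Q t μ) + ∫⁻ ν, ENNReal.ofReal (pair h ν) ∂(Q t μ') :=
        wassersteinOne_le_lintegral_add_lintegral d _ _ hpairh_meas.ennreal_ofReal hsplit
    _ ≤ ENNReal.ofReal (c * pair h μ) + ENNReal.ofReal (c * pair h μ') :=
        add_le_add (hmoment μ) (hmoment μ')
    _ = ENNReal.ofReal (c * (pair h μ + pair h μ')) := by
        rw [mul_add, ENNReal.ofReal_add (mul_nonneg hc (hpairh_nonneg μ))
          (mul_nonneg hc (hpairh_nonneg μ'))]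

/-- If `Q_t(μ,·)` has first moments `∫ ⟨h,ν⟩ Q_t(μ,dν) = ⟨R_t h, μ⟩` with
`R_t h ≤ C h e^{-δ t}`, and the cost satisfies `d(ν,ν') ≤ ⟨h,ν⟩ + ⟨h,ν'⟩`, then
`W₁(Q_t(μ,·), Q_t(μ',·)) ≤ C e^{-δ t} (⟨h,μ⟩ + ⟨h,μ'⟩)`. -/
theorem wasserstein_kernel_bound
    {E M : Type*} [MeasurableSpace M]
    (h : E → ℝ) (pair : (E → ℝ) → M → ℝ)
    (hpairh_nonneg : ∀ ν, 0 ≤ pair h ν)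
    (hpairh_meas : Measurable fun ν => pair h ν)
    (hpair_mono : ∀ (g₁ g₂ : E → ℝ) μ, (∀ x, g₁ x ≤ g₂ x) → pair g₁ μ ≤ pair g₂ μ)
    (hpair_smul : ∀ (c : ℝ) μ, 0 ≤ c → pair (fun x => c * h x) μ = c * pair h μ)
    (d : M → M → ℝ≥0∞)
    (hd_tri : ∀ ν ν' : M, d ν ν' ≤ ENNReal.ofReal (pair h ν + pair h ν'))
    (Q : ℝ → M → Measure M) (hQprob : ∀ t μ, IsProbabilityMeasure (Q t μ))
    (R : ℝ → (E → ℝ) → E → ℝ)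
    (C δ : ℝ) (hC : 0 < C) (hδ : 0 < δ)
    (hmom : ∀ t μ, ∫ ν, pair h ν ∂(Q t μ) = pair (R t h) μ)
    (hint : ∀ t μ, Integrable (fun ν => pair h ν) (Q t μ))
    (hRh : ∀ t, 0 ≤ t → ∀ x, R t h x ≤ C * h x * Real.exp (-δ * t)) :
    ∀ t, 0 ≤ t → ∀ μ μ' : M,
      wassersteinOne d (Q t μ) (Q t μ')
        ≤ ENNReal.ofReal (C * Real.exp (-δ * t) * (pair h μ + pair h μ')) :=
  wasserstein_kernel_bound_general h pair hpairh_nonneg hpairh_meas hpair_mono hpair_smul d hd_tri Q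
    hQprob R C δ hC hmom hint hRh
end
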